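/- arXiv:1903.07082 — 4 statements merged into one kernel-verified Lean document; each statement's English description precedes it below -/
import Mathlib

section
/- For a Binomial(n,x) random variable S and integer k with k < x·n, the lower tail satisfies e^{-n·kl(k/n, x)}/(n+1) ≤ P(S ≤ k) ≤ e^{-n·kl(k/n, x)}. -/
/-- Binary Kullback-Leibler divergence kl(p,q). -/
noncomputable def kl (p q : ℝ) : ℝ :=
  p * Real.log (p / q) + (1 - p) * Real.log ((1 - p) / (1 - q))

/-- pmf of the Binomial(n,x) distribution. -/
noncomputable def binomPMF (n : ℕ) (x : ℝ) (s : ℕ) : ℝ :=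
  (n.choose s : ℝ) * x ^ s * (1 - x) ^ (n - s)

/-- CDF of the Binomial(n,x) distribution: P(S ≤ k). -/
noncomputable def binomCDF (n : ℕ) (x : ℝ) (k : ℕ) : ℝ :=
  ∑ s ∈ Finset.range (k + 1), binomPMF n x s

/-!
With `p = k / n`, tilting `Binomial(n, p)` into `Binomial(n, x)` multiplies the mass at `s` by
`(x / p) ^ s * ((1 - x) / (1 - p)) ^ (n - s)`. At `s = k` this factor is exactly
`exp (-n * kl p x)`, and for `p ≤ x` it increases with `s` (monotone likelihood ratio), so summing
over `s ≤ k` gives the upper bound. For the lower bound keep only the term `s = k`: since `k` is a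
mode of `Binomial(n, k / n)`, whose `n + 1` masses sum to `1`, that mass is at least `1 / (n + 1)`.
-/

open Real Finset

lemma le_of_le_succ_of_succ_le {α : Type*} [Preorder α] {f : ℕ → α} {m : ℕ}
    (hup : ∀ s < m, f s ≤ f (s + 1)) (hdown : ∀ s ≥ m, f (s + 1) ≤ f s) (s : ℕ) : f s ≤ f m := by
  rcases le_total s m with hsm | hms
  · induction hsm using Nat.decreasingInduction with
    | self => exact le_rfl
    | of_succ t ht ih => exact (hup t ht).trans ih
  · exact antitoneOn_nat_Ici_of_succ_le hdown (show m ≤ m from le_rfl) hms hms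

section Binomial

variable {n : ℕ} {p x : ℝ}

lemma binomPMF_nonneg (hp0 : 0 ≤ p) (hp1 : p ≤ 1) (s : ℕ) : 0 ≤ binomPMF n p s := by
  have : 0 ≤ 1 - p := by linarith
  unfold binomPMF
  positivity

lemma sum_binomPMF (n : ℕ) (p : ℝ) : ∑ s ∈ range (n + 1), binomPMF n p s = 1 := by
  have h := add_pow p (1 - p) n
  rw [add_sub_cancel, one_pow] at h
  rw [h]
  exact sum_congr rfl fun s _ => by unfold binomPMF; ring

lemma binomPMF_le_binomCDF (hx0 : 0 ≤ x) (hx1 : x ≤ 1) (k : ℕ) :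
    binomPMF n x k ≤ binomCDF n x k :=
  single_le_sum (fun s _ => binomPMF_nonneg hx0 hx1 s) (self_mem_range_succ k)

lemma binomCDF_le_one {k : ℕ} (hkn : k ≤ n) (hp0 : 0 ≤ p) (hp1 : p ≤ 1) :
    binomCDF n p k ≤ 1 :=
  (sum_le_sum_of_subset_of_nonneg (range_subset_range.mpr (by omega))
    fun s _ _ => binomPMF_nonneg hp0 hp1 s).trans_eq (sum_binomPMF n p)

lemma binomPMF_succ_mul (n s : ℕ) (p : ℝ) :
    binomPMF n p (s + 1) * ((s + 1) * (1 - p)) = binomPMF n p s * ((n - s : ℕ) * p) := by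
  rcases lt_or_ge s n with hsn | hns
  · have hchoose : (n.choose (s + 1) : ℝ) * (s + 1) = n.choose s * (n - s : ℕ) := by
      exact_mod_cast Nat.choose_succ_right_eq n s
    have hpow : (1 - p) ^ (n - s) = (1 - p) ^ (n - (s + 1)) * (1 - p) := by
      rw [← pow_succ]; congr 1; omega
    unfold binomPMF
    rw [hpow]
    linear_combination p ^ (s + 1) * (1 - p) ^ (n - (s + 1) + 1) * hchoose
  · simp [binomPMF, Nat.choose_eq_zero_of_lt (Nat.lt_succ_of_le hns), Nat.sub_eq_zero_of_le hns]

lemma binomPMF_le_succ (hp1 : p < 1) {s : ℕ} (h : (s + 1 : ℝ) ≤ (n + 1) * p) :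
    binomPMF n p s ≤ binomPMF n p (s + 1) := by
  have hp0 : 0 < p := by nlinarith
  have hsn : s < n := by
    have : (s : ℝ) < n := by nlinarith
    exact_mod_cast this
  have hb : 0 < ((n - s : ℕ) : ℝ) * p := by
    have : 0 < n - s := by omega
    positivity
  refine le_of_mul_le_mul_right ?_ hb
  rw [← binomPMF_succ_mul, Nat.cast_sub hsn.le]
  refine mul_le_mul_of_nonneg_left ?_ (binomPMF_nonneg hp0.le hp1.le _)
  nlinarith

lemma binomPMF_succ_le (hp0 : 0 ≤ p) (hp1 : p < 1) {s : ℕ} (h : (n + 1) * p ≤ s + 1) :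
    binomPMF n p (s + 1) ≤ binomPMF n p s := by
  have ha : 0 < ((s : ℝ) + 1) * (1 - p) := by
    have : 0 < 1 - p := by linarith
    positivity
  refine le_of_mul_le_mul_right ?_ ha
  rw [binomPMF_succ_mul]
  refine mul_le_mul_of_nonneg_left ?_ (binomPMF_nonneg hp0 hp1.le _)
  rcases le_total s n with hsn | hns
  · rw [Nat.cast_sub hsn]
    nlinarith
  · rw [Nat.sub_eq_zero_of_le hns, Nat.cast_zero, zero_mul]
    exact ha.le

lemma binomPMF_le_binomPMF_of_mode (hp0 : 0 ≤ p) (hp1 : p < 1) {m : ℕ}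
    (hlo : (n + 1) * p ≤ m + 1) (hhi : (m : ℝ) ≤ (n + 1) * p) (s : ℕ) :
    binomPMF n p s ≤ binomPMF n p m := by
  refine le_of_le_succ_of_succ_le (f := binomPMF n p) (fun t ht => binomPMF_le_succ hp1 ?_)
    (fun t ht => binomPMF_succ_le hp0 hp1 ?_) s
  · exact le_trans (by exact_mod_cast ht) hhi
  · exact hlo.trans (by exact_mod_cast Nat.succ_le_succ ht)

lemma inv_succ_le_binomPMF_of_mode (hp0 : 0 ≤ p) (hp1 : p < 1) {m : ℕ}
    (hlo : (n + 1) * p ≤ m + 1) (hhi : (m : ℝ) ≤ (n + 1) * p) :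
    1 / ((n : ℝ) + 1) ≤ binomPMF n p m := by
  rw [div_le_iff₀ (by positivity)]
  calc 1 = ∑ s ∈ range (n + 1), binomPMF n p s := (sum_binomPMF n p).symm
    _ ≤ ∑ _s ∈ range (n + 1), binomPMF n p m :=
        sum_le_sum fun s _ => binomPMF_le_binomPMF_of_mode hp0 hp1 hlo hhi s
    _ = binomPMF n p m * ((n : ℝ) + 1) := by
        rw [sum_const, card_range, nsmul_eq_mul]
        push_cast
        ring

lemma binomPMF_mul_binomPMF_le {s k : ℕ} (hsk : s ≤ k) (hkn : k ≤ n) (hp : 0 ≤ p) (hpx : p ≤ x)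
    (hx : x ≤ 1) :
    binomPMF n x s * binomPMF n p k ≤ binomPMF n p s * binomPMF n x k := by
  obtain ⟨d, rfl⟩ := Nat.exists_eq_add_of_le hsk
  have hratio : p ^ d * (1 - x) ^ d ≤ x ^ d * (1 - p) ^ d := by
    rw [← mul_pow, ← mul_pow]
    exact pow_le_pow_left₀ (mul_nonneg hp (by linarith)) (by nlinarith) d
  set M := (n.choose s : ℝ) * n.choose (s + d) * x ^ s * p ^ s
      * (1 - x) ^ (n - (s + d)) * (1 - p) ^ (n - (s + d))
  have hM : 0 ≤ M := by
    have : 0 ≤ x := hp.trans hpx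
    have : 0 ≤ 1 - x := by linarith
    have : 0 ≤ 1 - p := by linarith
    positivity
  unfold binomPMF
  rw [show n - s = n - (s + d) + d by omega]
  calc _ = M * (p ^ d * (1 - x) ^ d) := by ring
    _ ≤ M * (x ^ d * (1 - p) ^ d) := mul_le_mul_of_nonneg_left hratio hM
    _ = _ := by ring

lemma binomCDF_le_div {k : ℕ} (hkn : k ≤ n) (hp : 0 ≤ p) (hpx : p ≤ x) (hx : x ≤ 1)
    (hpos : 0 < binomPMF n p k) :
    binomCDF n x k ≤ binomPMF n x k / binomPMF n p k := by
  rw [le_div_iff₀ hpos, binomCDF, sum_mul]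
  calc ∑ s ∈ range (k + 1), binomPMF n x s * binomPMF n p k
      ≤ ∑ s ∈ range (k + 1), binomPMF n p s * binomPMF n x k :=
        sum_le_sum fun s hs =>
          binomPMF_mul_binomPMF_le (Nat.lt_succ_iff.mp (mem_range.mp hs)) hkn hp hpx hx
    _ = binomCDF n p k * binomPMF n x k := by rw [binomCDF, sum_mul]
    _ ≤ binomPMF n x k :=
        mul_le_of_le_one_left (binomPMF_nonneg (hp.trans hpx) hx k)
          (binomCDF_le_one hkn hp (hpx.trans hx))

end Binomial

lemma exp_neg_nat_mul_log_div_mul_pow (m : ℕ) {a b : ℝ} (ha : 0 < a ∨ m = 0) (hb : 0 < b) :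
    exp (-(m * log (a / b))) * a ^ m = b ^ m := by
  rcases ha with ha | rfl
  · rw [exp_neg, exp_nat_mul, exp_log (div_pos ha hb), div_pow, inv_div, div_mul_cancel₀]
    positivity
  · simp

lemma binomPMF_eq_binomPMF_mul_exp_neg_kl {n k : ℕ} (hkn : k ≤ n) {x : ℝ} (hx0 : 0 < x)
    (hx1 : x < 1) :
    binomPMF n x k = binomPMF n ((k : ℝ) / n) k * exp (-(n : ℝ) * kl ((k : ℝ) / n) x) := by
  set p : ℝ := (k : ℝ) / n with hp_def
  have hnp : (n : ℝ) * p = k := by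
    rcases Nat.eq_zero_or_pos n with rfl | hn
    · simp [show k = 0 by omega]
    · rw [hp_def]
      field_simp
  have hnq : (n : ℝ) * (1 - p) = (n - k : ℕ) := by rw [mul_sub, mul_one, hnp, Nat.cast_sub hkn]
  have hp : 0 < p ∨ k = 0 := by
    rcases Nat.eq_zero_or_pos k with hk | hk
    · exact Or.inr hk
    · exact Or.inl (pos_of_mul_pos_right (by rw [hnp]; exact_mod_cast hk) n.cast_nonneg)
  have hq : 0 < 1 - p ∨ n - k = 0 := by
    rcases Nat.eq_zero_or_pos (n - k) with hk | hk
    · exact Or.inr hk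
    · exact Or.inl (pos_of_mul_pos_right (by rw [hnq]; exact_mod_cast hk) n.cast_nonneg)
  have hsplit : -(n : ℝ) * kl p x
      = -(k * log (p / x)) + -((n - k : ℕ) * log ((1 - p) / (1 - x))) := by
    rw [kl, ← hnp, ← hnq]
    ring
  rw [hsplit, exp_add, binomPMF, binomPMF,
    ← exp_neg_nat_mul_log_div_mul_pow k hp hx0,
    ← exp_neg_nat_mul_log_div_mul_pow (n - k) hq (by linarith)]
  ring

/-- Sanov inequalities for the lower tail of a Binomial(n,x) random variable:
for an integer k with 0 ≤ k < x·n,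
e^{-n·kl(k/n,x)}/(n+1) ≤ P(S ≤ k) ≤ e^{-n·kl(k/n,x)}. -/
theorem sanov_binomial_lower_tail (n k : ℕ) (x : ℝ) (hx0 : 0 < x) (hx1 : x < 1)
    (hk : (k : ℝ) < x * n) :
    Real.exp (-(n : ℝ) * kl ((k : ℝ) / n) x) / ((n : ℝ) + 1) ≤ binomCDF n x k ∧
    binomCDF n x k ≤ Real.exp (-(n : ℝ) * kl ((k : ℝ) / n) x) := by
  have hkn : (k : ℝ) < n := hk.trans_le (by nlinarith [(n.cast_nonneg : (0 : ℝ) ≤ n)])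
  have hn : (0 : ℝ) < n := (k.cast_nonneg).trans_lt hkn
  set p : ℝ := (k : ℝ) / n
  set w := exp (-(n : ℝ) * kl p x)
  have hp0 : 0 ≤ p := by positivity
  have hp1 : p < 1 := (div_lt_one hn).mpr hkn
  have hpx : p ≤ x := ((div_lt_iff₀ hn).mpr hk).le
  have hnp : (n : ℝ) * p = k := mul_div_cancel₀ _ hn.ne'
  have hmode : 1 / ((n : ℝ) + 1) ≤ binomPMF n p k :=
    inv_succ_le_binomPMF_of_mode hp0 hp1 (by linarith) (by linarith)
  have htilt : binomPMF n x k = binomPMF n p k * w :=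
    binomPMF_eq_binomPMF_mul_exp_neg_kl (by exact_mod_cast hkn.le) hx0 hx1
  constructor
  · calc w / ((n : ℝ) + 1) = 1 / ((n : ℝ) + 1) * w := by ring
      _ ≤ binomPMF n p k * w := mul_le_mul_of_nonneg_right hmode (exp_pos _).le
      _ = binomPMF n x k := htilt.symm
      _ ≤ binomCDF n x k := binomPMF_le_binomCDF hx0.le hx1.le k
  · have hpos : 0 < binomPMF n p k := (by positivity : (0 : ℝ) < 1 / (n + 1)).trans_le hmode
    calc binomCDF n x k ≤ binomPMF n x k / binomPMF n p k :=
          binomCDF_le_div (by exact_mod_cast hkn.le) hp0 hpx hx1.le hpos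
      _ = w := by rw [htilt, mul_div_cancel_left₀ _ hpos.ne']
end

section
/- Let 0 < y < y' < 1 with kl(y,y') ≥ log(2(j+2))/(j+1). Then for every integer s with s ≤ (j+1)y, it holds that P(S_{j+1,y'} ≤ s) ≤ (1/2) P(S_{j+1,y} ≤ s), where S_{n,x} denotes a Binomial(n,x) random variable. -/
open Real

noncomputable def binomLikelihoodRatio (n : ℕ) (y y' : ℝ) (t : ℕ) : ℝ :=
  (y' / y) ^ t * ((1 - y') / (1 - y)) ^ (n - t)

lemma binomPMF_nonneg_s4 {x : ℝ} (hx0 : 0 ≤ x) (hx1 : x ≤ 1) (n t : ℕ) : 0 ≤ binomPMF n x t := by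
  have : 0 ≤ 1 - x := by linarith
  unfold binomPMF
  positivity

lemma binomCDF_nonneg {x : ℝ} (hx0 : 0 ≤ x) (hx1 : x ≤ 1) (n k : ℕ) : 0 ≤ binomCDF n x k :=
  Finset.sum_nonneg fun t _ => binomPMF_nonneg_s4 hx0 hx1 n t

lemma binomPMF_eq_mul_binomLikelihoodRatio {y : ℝ} (hy0 : y ≠ 0) (hy1 : y ≠ 1) (n : ℕ)
    (y' : ℝ) (t : ℕ) :
    binomPMF n y' t = binomPMF n y t * binomLikelihoodRatio n y y' t := by
  have : 1 - y ≠ 0 := sub_ne_zero.mpr (Ne.symm hy1)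
  unfold binomPMF binomLikelihoodRatio
  rw [div_pow, div_pow]
  field_simp

lemma pow_mul_pow_sub_le_pow_mul_pow_sub {R : Type*} [CommSemiring R] [PartialOrder R]
    [IsOrderedRing R] {a b : R} (hb : 0 ≤ b) (hba : b ≤ a) {n s t : ℕ}
    (hts : t ≤ s) (hsn : s ≤ n) :
    a ^ t * b ^ (n - t) ≤ a ^ s * b ^ (n - s) := by
  have ha : 0 ≤ a := hb.trans hba
  calc a ^ t * b ^ (n - t) = a ^ t * b ^ (s - t) * b ^ (n - s) := by
        rw [mul_assoc, ← pow_add]; congr 2; omega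
    _ ≤ a ^ t * a ^ (s - t) * b ^ (n - s) := by gcongr
    _ = a ^ s * b ^ (n - s) := by rw [← pow_add, Nat.add_sub_cancel' hts]

lemma binomLikelihoodRatio_mono {y y' : ℝ} (hy0 : 0 < y) (hyy : y ≤ y') (hy1 : y' ≤ 1)
    (hy1' : y < 1) {n s t : ℕ} (hts : t ≤ s) (hsn : s ≤ n) :
    binomLikelihoodRatio n y y' t ≤ binomLikelihoodRatio n y y' s := by
  apply pow_mul_pow_sub_le_pow_mul_pow_sub (div_nonneg (by linarith) (by linarith)) _ hts hsn
  calc (1 - y') / (1 - y) ≤ 1 := div_le_one_of_le₀ (by linarith) (by linarith)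
    _ ≤ y' / y := (one_le_div hy0).mpr hyy

lemma binomCDF_le_binomLikelihoodRatio_mul {y y' : ℝ} (hy0 : 0 < y) (hyy : y ≤ y')
    (hy1 : y' ≤ 1) (hy1' : y < 1) {n s : ℕ} (hsn : s ≤ n) :
    binomCDF n y' s ≤ binomLikelihoodRatio n y y' s * binomCDF n y s := by
  rw [binomCDF, binomCDF, Finset.mul_sum]
  refine Finset.sum_le_sum fun t ht => ?_
  have hts : t ≤ s := Nat.lt_succ_iff.mp (Finset.mem_range.mp ht)
  rw [binomPMF_eq_mul_binomLikelihoodRatio hy0.ne' hy1'.ne, mul_comm]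
  exact mul_le_mul_of_nonneg_right (binomLikelihoodRatio_mono hy0 hyy hy1 hy1' hts hsn)
    (binomPMF_nonneg_s4 hy0.le hy1'.le n t)

lemma neg_kl_eq {y y' : ℝ} (hy0 : 0 < y) (hy'0 : 0 < y') (hy1 : y < 1) (hy'1 : y' < 1) :
    -kl y y' = y * log (y' / y) + (1 - y) * log ((1 - y') / (1 - y)) := by
  rw [kl, log_div hy0.ne' hy'0.ne', log_div hy'0.ne' hy0.ne', log_div (by linarith) (by linarith),
    log_div (by linarith) (by linarith)]
  ring

lemma binomLikelihoodRatio_le_exp_neg_kl {y y' : ℝ} (hy0 : 0 < y) (hyy : y < y') (hy1 : y' < 1)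
    {n s : ℕ} (hs : (s : ℝ) ≤ n * y) :
    binomLikelihoodRatio n y y' s ≤ exp (-(n * kl y y')) := by
  have hy'0 : 0 < y' := hy0.trans hyy
  have hy1' : y < 1 := hyy.trans hy1
  have hsn : s ≤ n := by exact_mod_cast hs.trans (mul_le_of_le_one_right n.cast_nonneg hy1'.le)
  have hup : 0 < log (y' / y) := log_pos ((one_lt_div hy0).mpr hyy)
  have hb : 0 < (1 - y') / (1 - y) := div_pos (by linarith) (by linarith)
  have hdown : log ((1 - y') / (1 - y)) < 0 :=
    log_neg hb ((div_lt_one (by linarith)).mpr (by linarith))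
  have hpos : 0 < binomLikelihoodRatio n y y' s := by unfold binomLikelihoodRatio; positivity
  have hlog : log (binomLikelihoodRatio n y y' s)
      = s * log (y' / y) + (n - s : ℝ) * log ((1 - y') / (1 - y)) := by
    rw [binomLikelihoodRatio, log_mul (by positivity) (by positivity), log_pow, log_pow,
      Nat.cast_sub hsn]
  rw [← exp_log hpos, exp_le_exp, hlog, ← mul_neg, neg_kl_eq hy0 hy'0 hy1' hy1]
  have hbelow : (n : ℝ) * (1 - y) ≤ n - s := by linarith
  linarith [mul_le_mul_of_nonneg_right hs hup.le, mul_le_mul_of_nonpos_right hbelow hdown.le]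

/-- if 0 < y < y' < 1 with kl(y,y') ≥ log(2(j+2))/(j+1), then for every
integer s with s ≤ (j+1)y, P(S_{j+1,y'} ≤ s) ≤ (1/2) P(S_{j+1,y} ≤ s). -/
theorem binomial_cdf_domination (j s : ℕ) (y y' : ℝ) (hy0 : 0 < y) (hyy : y < y')
    (hy1 : y' < 1) (hkl : Real.log (2 * ((j : ℝ) + 2)) / ((j : ℝ) + 1) ≤ kl y y')
    (hs : (s : ℝ) ≤ ((j : ℝ) + 1) * y) :
    binomCDF (j + 1) y' s ≤ (1 / 2) * binomCDF (j + 1) y s := by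
  have hy1' : y < 1 := hyy.trans hy1
  have hsn : s ≤ j + 1 := by
    exact_mod_cast hs.trans (mul_le_of_le_one_right (by positivity) hy1'.le)
  have hexp : exp (-(((j + 1 : ℕ) : ℝ) * kl y y')) ≤ 1 / 2 := by
    have hlog2 : log 2 ≤ ((j : ℝ) + 1) * kl y y' := calc
      log 2 ≤ log (2 * ((j : ℝ) + 2)) := log_le_log two_pos (by linarith [j.cast_nonneg (α := ℝ)])
      _ ≤ ((j : ℝ) + 1) * kl y y' := by rwa [div_le_iff₀' (by positivity)] at hkl
    rw [one_div, ← exp_log (two_pos (α := ℝ)), ← exp_neg, exp_le_exp]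
    push_cast
    linarith
  calc binomCDF (j + 1) y' s
      ≤ binomLikelihoodRatio (j + 1) y y' s * binomCDF (j + 1) y s :=
        binomCDF_le_binomLikelihoodRatio_mul hy0 hyy.le hy1.le hy1' hsn
    _ ≤ (1 / 2) * binomCDF (j + 1) y s := by
        refine mul_le_mul_of_nonneg_right ?_ (binomCDF_nonneg hy0.le hy1'.le _ _)
        exact (binomLikelihoodRatio_le_exp_neg_kl hy0 hyy hy1 (by exact_mod_cast hs)).trans hexp
end

section
/- Let 0 < p_k < d < 1 and let X_{a,b} denote a Beta(a,b) random variable. There exists j_0 (depending only on y, y', where p_k < y < y' < 1) such that for all j ≥ j_0 and all integers s ∈ {0,...,j}: P(y ≤ X_{s+1, j-s+1} ≤ y') ≥ (1/2) min{ P(X_{s+1, j-s+1} ≥ y), P(X_{s+1, j-s+1} ≤ y') }. -/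
/-!
Up to normalisation, `Beta(s + 1, j - s + 1)` has density `g t = t ^ s * (1 - t) ^ (j - s)`;
let `A`, `M`, `U` be its masses on `[0, y]`, `[y, y']`, `[y', 1]`. It suffices that `U ≤ M` or
`A ≤ M`. As `log g` is concave, `g` lies below the exponential of its tangent line at `y'`.
If the mode `s / j` lies left of the midpoint `m` of `[y, y']`, the slope of `log g` at `y'` is
at most `-2 j (y' - y)`, so `U ≤ g y' * (y' - y) / 2` once `j (y' - y)² ≥ 1`; and `g` decreases
past its mode, so `M ≥ g y' * (y' - y) / 2`. The other case follows by the symmetry `t ↦ 1 - t`.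
-/

/-- CDF of the Beta(a,b) distribution (integer parameters a,b ≥ 1):
P(X ≤ x) = ∫₀ˣ t^{a-1}(1-t)^{b-1} dt / B(a,b). -/
noncomputable def betaCDF (a b : ℕ) (x : ℝ) : ℝ :=
  (∫ t in Set.Ioc (0 : ℝ) x, t ^ (a - 1) * (1 - t) ^ (b - 1)) /
    (∫ t in Set.Ioc (0 : ℝ) 1, t ^ (a - 1) * (1 - t) ^ (b - 1))

open Real Set intervalIntegral
open MeasureTheory (volume)

lemma pow_le_pow_mul_exp {c x : ℝ} (hc : 0 < c) (hx : 0 ≤ x) (n : ℕ) :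
    x ^ n ≤ c ^ n * exp (n * (x / c - 1)) := by
  have hx_le : x ≤ c * exp (x / c - 1) := by
    have := add_one_le_exp (x / c - 1)
    rwa [sub_add_cancel, div_le_iff₀' hc] at this
  calc x ^ n ≤ (c * exp (x / c - 1)) ^ n := by gcongr
    _ = c ^ n * exp (n * (x / c - 1)) := by rw [mul_pow, ← exp_nat_mul]

/-- The tangent-line bound for the concave function `log (t ^ p * (1 - t) ^ q)` at `c`. -/
lemma pow_mul_one_sub_pow_le_mul_exp (p q : ℕ) {c t : ℝ} (hc0 : 0 < c) (hc1 : c < 1)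
    (ht0 : 0 ≤ t) (ht1 : t ≤ 1) :
    t ^ p * (1 - t) ^ q ≤ c ^ p * (1 - c) ^ q * exp ((p / c - q / (1 - c)) * (t - c)) := by
  have hc1' : 0 < 1 - c := by linarith
  calc t ^ p * (1 - t) ^ q
      ≤ (c ^ p * exp (p * (t / c - 1))) * ((1 - c) ^ q * exp (q * ((1 - t) / (1 - c) - 1))) := by
        gcongr
        · exact pow_le_pow_mul_exp hc0 ht0 p
        · exact pow_le_pow_mul_exp hc1' (by linarith) q
    _ = c ^ p * (1 - c) ^ q * exp ((p / c - q / (1 - c)) * (t - c)) := by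
        rw [mul_mul_mul_comm, ← exp_add]
        congr 2
        field_simp
        ring

lemma antitoneOn_pow_mul_one_sub_pow (p q : ℕ) {a : ℝ} (ha : 0 < a)
    (hmode : (p : ℝ) ≤ (p + q) * a) :
    AntitoneOn (fun t : ℝ => t ^ p * (1 - t) ^ q) (Icc a 1) := by
  intro t ht c hc htc
  rcases eq_or_lt_of_le ht.2 with rfl | ht1
  · rw [le_antisymm hc.2 htc]
  have ht0 : 0 < t := ha.trans_le ht.1
  have hslope : (p : ℝ) / t - q / (1 - t) ≤ 0 := by
    rw [div_sub_div _ _ ht0.ne' (by linarith : (1 : ℝ) - t ≠ 0)]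
    apply div_nonpos_of_nonpos_of_nonneg _ (by nlinarith)
    nlinarith [ht.1]
  calc c ^ p * (1 - c) ^ q
      ≤ t ^ p * (1 - t) ^ q * exp ((p / t - q / (1 - t)) * (c - t)) :=
        pow_mul_one_sub_pow_le_mul_exp p q ht0 ht1 (ht0.le.trans htc) hc.2
    _ ≤ t ^ p * (1 - t) ^ q := by
        have : 0 ≤ 1 - t := by linarith
        refine mul_le_of_le_one_right (by positivity) (exp_le_one_iff.mpr ?_)
        exact mul_nonpos_of_nonpos_of_nonneg hslope (by linarith)

lemma integral_exp_mul_sub_le {L a b : ℝ} (hL : L < 0) :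
    ∫ t in a..b, exp (L * (t - a)) ≤ -L⁻¹ := by
  have h := integral_comp_mul_sub exp hL.ne (L * a) (a := a) (b := b)
  simp only [mul_sub] at h ⊢
  rw [h, integral_exp, sub_self, exp_zero, smul_eq_mul]
  nlinarith [exp_pos (L * b - L * a), inv_lt_zero.mpr hL]

lemma AntitoneOn.sub_mul_le_integral {f : ℝ → ℝ} {a b : ℝ} (hab : a ≤ b)
    (hf : AntitoneOn f (Icc a b)) : (b - a) * f b ≤ ∫ x in a..b, f x := by
  have hfi : IntervalIntegrable f volume a b :=
    AntitoneOn.intervalIntegrable (by rwa [uIcc_of_le hab])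
  calc (b - a) * f b = ∫ _ in a..b, f b := by simp
    _ ≤ ∫ x in a..b, f x :=
        integral_mono_on hab intervalIntegrable_const hfi
          fun x hx => hf hx (right_mem_Icc.mpr hab) hx.2

lemma integral_pow_mul_one_sub_pow_le (p q : ℕ) {c : ℝ} (hc0 : 0 < c) (hc1 : c < 1)
    (hslope : (p : ℝ) / c - q / (1 - c) < 0) :
    ∫ t in c..1, t ^ p * (1 - t) ^ q ≤ c ^ p * (1 - c) ^ q * -(p / c - q / (1 - c))⁻¹ := by
  have hc1' : 0 < 1 - c := by linarith
  calc ∫ t in c..1, t ^ p * (1 - t) ^ q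
      ≤ ∫ t in c..1, c ^ p * (1 - c) ^ q * exp ((p / c - q / (1 - c)) * (t - c)) := by
        refine integral_mono_on hc1.le (Continuous.intervalIntegrable (by fun_prop) _ _)
          (Continuous.intervalIntegrable (by fun_prop) _ _) fun t ht => ?_
        exact pow_mul_one_sub_pow_le_mul_exp p q hc0 hc1 (hc0.le.trans ht.1) ht.2
    _ ≤ c ^ p * (1 - c) ^ q * -(p / c - q / (1 - c))⁻¹ := by
        rw [integral_const_mul]
        gcongr
        exact integral_exp_mul_sub_le hslope

lemma integral_right_tail_le_window (p q : ℕ) {y y' : ℝ} (hy0 : 0 < y) (hyy : y < y')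
    (hy1 : y' < 1) (hmode : (p : ℝ) ≤ (p + q) * ((y + y') / 2))
    (hlarge : 1 ≤ ((p : ℝ) + q) * (y' - y) ^ 2) :
    ∫ t in y'..1, t ^ p * (1 - t) ^ q ≤ ∫ t in y..y', t ^ p * (1 - t) ^ q := by
  have hy'0 : 0 < y' := hy0.trans hyy
  have hy1' : 0 < 1 - y' := by linarith
  set S : ℝ := p / y' - q / (1 - y') with hS
  -- `S` is the log-derivative at `y'`, at least `(y' - y) / 2` to the right of the mode.
  have hS_le : S ≤ -(2 * (p + q) * (y' - y)) := by
    rw [hS, div_sub_div _ _ hy'0.ne' hy1'.ne', div_le_iff₀ (by positivity)]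
    nlinarith [sq_nonneg (2 * y' - 1), mul_pos hy'0 hy1']
  have hS_neg : S < 0 := by nlinarith
  have hinv : -S⁻¹ ≤ y' - (y + y') / 2 := by
    rw [← inv_neg, inv_le_iff_one_le_mul₀ (by linarith)]
    nlinarith
  have hmid_pos : 0 < (y + y') / 2 := by linarith
  calc ∫ t in y'..1, t ^ p * (1 - t) ^ q
      ≤ y' ^ p * (1 - y') ^ q * -S⁻¹ := integral_pow_mul_one_sub_pow_le p q hy'0 hy1 hS_neg
    _ ≤ (y' - (y + y') / 2) * (y' ^ p * (1 - y') ^ q) := by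
        rw [mul_comm]; gcongr
    _ ≤ ∫ t in (y + y') / 2..y', t ^ p * (1 - t) ^ q :=
        ((antitoneOn_pow_mul_one_sub_pow p q hmid_pos hmode).mono
          (Icc_subset_Icc_right hy1.le)).sub_mul_le_integral (by linarith)
    _ ≤ (∫ t in y..(y + y') / 2, t ^ p * (1 - t) ^ q) +
          ∫ t in (y + y') / 2..y', t ^ p * (1 - t) ^ q := by
        refine le_add_of_nonneg_left (integral_nonneg (by linarith) fun t ht => ?_)
        have : 0 ≤ 1 - t := by linarith [ht.2]
        have : 0 ≤ t := by linarith [ht.1]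
        positivity
    _ = ∫ t in y..y', t ^ p * (1 - t) ^ q :=
        integral_add_adjacent_intervals (Continuous.intervalIntegrable (by fun_prop) _ _)
          (Continuous.intervalIntegrable (by fun_prop) _ _)

lemma integral_pow_mul_one_sub_pow_reflect (p q : ℕ) (a b : ℝ) :
    ∫ t in a..b, t ^ p * (1 - t) ^ q = ∫ t in 1 - b..1 - a, t ^ q * (1 - t) ^ p := by
  rw [← integral_comp_sub_left (fun t => t ^ q * (1 - t) ^ p)]
  simp only [sub_sub_cancel, mul_comm]

lemma integral_left_tail_le_window (p q : ℕ) {y y' : ℝ} (hy0 : 0 < y) (hyy : y < y')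
    (hy1 : y' < 1) (hmode : ((p : ℝ) + q) * ((y + y') / 2) ≤ p)
    (hlarge : 1 ≤ ((p : ℝ) + q) * (y' - y) ^ 2) :
    ∫ t in (0 : ℝ)..y, t ^ p * (1 - t) ^ q ≤ ∫ t in y..y', t ^ p * (1 - t) ^ q := by
  have hwidth : ((q : ℝ) + p) * ((1 - y) - (1 - y')) ^ 2 = (p + q) * (y' - y) ^ 2 := by ring
  rw [integral_pow_mul_one_sub_pow_reflect p q 0 y, integral_pow_mul_one_sub_pow_reflect p q y y',
    sub_zero]
  exact integral_right_tail_le_window q p (y := 1 - y') (y' := 1 - y) (by linarith)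
    (by linarith) (by linarith) (by nlinarith) (hwidth ▸ hlarge)

lemma betaCDF_succ_succ (p q : ℕ) {x : ℝ} (hx : 0 ≤ x) :
    betaCDF (p + 1) (q + 1) x =
      (∫ t in (0 : ℝ)..x, t ^ p * (1 - t) ^ q) /
        ∫ t in (0 : ℝ)..1, t ^ p * (1 - t) ^ q := by
  simp only [betaCDF, Nat.add_sub_cancel, integral_of_le hx, integral_of_le zero_le_one]

lemma half_min_le_of_tail_le {A M U : ℝ} (hZ : 0 < A + M + U) (htail : U ≤ M ∨ A ≤ M) :
    (1 / 2) * min (1 - A / (A + M + U)) ((A + M) / (A + M + U)) ≤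
      (A + M) / (A + M + U) - A / (A + M + U) := by
  have hmin : min (M + U) (A + M) ≤ 2 * M := by
    rcases htail with h | h
    · linarith [min_le_left (M + U) (A + M)]
    · linarith [min_le_right (M + U) (A + M)]
  rw [one_sub_div hZ.ne', min_div_div_right hZ.le, div_sub_div_same, ← mul_div_assoc,
    div_le_div_iff_of_pos_right hZ, add_sub_cancel_left, show A + M + U - A = M + U by ring]
  linarith

lemma half_min_le_betaCDF_sub (p q : ℕ) {y y' : ℝ} (hy0 : 0 < y) (hyy : y < y')
    (htail : (∫ t in y'..1, t ^ p * (1 - t) ^ q) ≤ ∫ t in y..y', t ^ p * (1 - t) ^ q ∨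
      (∫ t in (0 : ℝ)..y, t ^ p * (1 - t) ^ q) ≤ ∫ t in y..y', t ^ p * (1 - t) ^ q) :
    (1 / 2) * min (1 - betaCDF (p + 1) (q + 1) y) (betaCDF (p + 1) (q + 1) y') ≤
      betaCDF (p + 1) (q + 1) y' - betaCDF (p + 1) (q + 1) y := by
  have hf (a b : ℝ) :
      IntervalIntegrable (fun t : ℝ => t ^ p * (1 - t) ^ q) volume a b :=
    Continuous.intervalIntegrable (by fun_prop) a b
  have hZ : 0 < ∫ t in (0 : ℝ)..1, t ^ p * (1 - t) ^ q := by
    refine intervalIntegral_pos_of_pos_on (hf 0 1) (fun t ht => ?_) one_pos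
    have : 0 < 1 - t := by linarith [ht.2]
    have := ht.1
    positivity
  rw [betaCDF_succ_succ p q hy0.le, betaCDF_succ_succ p q (hy0.le.trans hyy.le)]
  rw [← integral_add_adjacent_intervals (hf 0 y') (hf y' 1),
    ← integral_add_adjacent_intervals (hf 0 y) (hf y y')] at hZ ⊢
  exact half_min_le_of_tail_le hZ htail

/-- for fixed 0 < y < y' < 1 there exists j₀ such that for all j ≥ j₀ and all
integers s ∈ {0,…,j}, the Beta(s+1, j-s+1) random variable X satisfies
P(y ≤ X ≤ y') ≥ (1/2) min{ P(X ≥ y), P(X ≤ y') }. -/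
theorem beta_interval_lower_bound (y y' : ℝ) (hy0 : 0 < y) (hyy : y < y') (hy1 : y' < 1) :
    ∃ j₀ : ℕ, ∀ j ≥ j₀, ∀ s ≤ j,
      (1 / 2) * min (1 - betaCDF (s + 1) (j - s + 1) y) (betaCDF (s + 1) (j - s + 1) y') ≤
        betaCDF (s + 1) (j - s + 1) y' - betaCDF (s + 1) (j - s + 1) y := by
  refine ⟨⌈((y' - y) ^ 2)⁻¹⌉₊, fun j hj s hs => ?_⟩
  have hsum : (s : ℝ) + ((j - s : ℕ) : ℝ) = j := by rw [Nat.cast_sub hs]; ring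
  have hlarge : 1 ≤ ((s : ℝ) + ((j - s : ℕ) : ℝ)) * (y' - y) ^ 2 := by
    rw [hsum, ← inv_le_iff_one_le_mul₀ (by nlinarith)]
    exact (Nat.ceil_le.mp hj)
  apply half_min_le_betaCDF_sub s (j - s) hy0 hyy
  rcases le_total (s : ℝ) ((s + (j - s : ℕ)) * ((y + y') / 2)) with hmode | hmode
  · exact Or.inl (integral_right_tail_le_window s (j - s) hy0 hyy hy1 hmode hlarge)
  · exact Or.inr (integral_left_tail_le_window s (j - s) hy0 hyy hy1 hmode hlarge)
end

section
/- (Sequential Halving inversion bound.) Let p_k, p_{k*}, θ ∈ (0,1) with |p_{k*} - θ| < |p_k - θ|, and let p̂_k, p̂_{k*} be empirical means of t independent Bernoulli samples from each arm. Then P(|p̂_{k*} - θ| > |p̂_k - θ|) ≤ 3 exp(-(t/2) Δ_k²), where Δ_k = |p_k - θ| - |p_{k*} - θ| = min{|p_k - p_{k*}|, |p_k - (2θ - p_{k*})|}. -/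
open MeasureTheory

/-- The Bernoulli measure on Bool with success probability p (for p ∈ [0,1]). -/
noncomputable def bern (p : ℝ) : Measure Bool :=
  (PMF.bernoulli (min (Real.toNNReal p) 1) (min_le_right _ _)).toMeasure

instance (p : ℝ) : IsProbabilityMeasure (bern p) := by
  unfold bern; infer_instance

/-- Empirical mean of t Bernoulli samples (Bool-valued, counted as 0/1). -/
noncomputable def empMean {t : ℕ} (v : Fin t → Bool) : ℝ :=
  (∑ i, if v i then (1 : ℝ) else 0) / t

/-! Hoeffding's lemma makes each centred Bernoulli coordinate `1/4`-sub-Gaussian, so the centred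
sum of `t` independent samples is `t/4`-sub-Gaussian, and a one-sided deviation of size
`s = Δ_k / 2` of an empirical mean has probability at most `exp (-2 t s²) = exp (-(t/2) Δ_k²)`.
If `p̂_k` has not moved by `s` from `p_k` towards `θ` and `p̂_{k*}` stays within `s` of
`p_{k*}`, then `|p̂_k - θ| > |p_k - θ| - s = |p_{k*} - θ| + s > |p̂_{k*} - θ|`, so an inversion
forces one of three one-sided deviations. -/

open Real ProbabilityTheory
open scoped NNReal

lemma integral_bern_ite {p : ℝ} (hp0 : 0 ≤ p) (hp1 : p ≤ 1) :
    ∫ b, (if b then (1 : ℝ) else 0) ∂bern p = p := by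
  rw [integral_fintype .of_finite, Fintype.sum_bool]
  simp [bern, PMF.bernoulli, measureReal_def, hp0, hp1]

lemma hasSubgaussianMGF_bern {p : ℝ} (hp0 : 0 ≤ p) (hp1 : p ≤ 1) :
    HasSubgaussianMGF (fun b : Bool ↦ (if b then (1 : ℝ) else 0) - p) (1 / 4) (bern p) := by
  have h := hasSubgaussianMGF_of_mem_Icc (μ := bern p)
    (X := fun b : Bool ↦ if b then (1 : ℝ) else 0) (a := 0) (b := 1)
    (measurable_of_finite _).aemeasurable
    (ae_of_all _ fun b ↦ by cases b <;> simp)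
  rw [integral_bern_ite hp0 hp1] at h
  convert h using 1
  ext; norm_num

lemma hasSubgaussianMGF_sum_pi_bern {ι : Type*} [Fintype ι] {p : ℝ} (hp0 : 0 ≤ p) (hp1 : p ≤ 1) :
    HasSubgaussianMGF (fun v : ι → Bool ↦ ∑ i, ((if v i then (1 : ℝ) else 0) - p))
      (Fintype.card ι / 4) (Measure.pi fun _ ↦ bern p) := by
  have hind := iIndepFun_pi (μ := fun _ : ι ↦ bern p)
    (X := fun _ b ↦ (if b then (1 : ℝ) else 0) - p) fun _ ↦ (measurable_of_finite _).aemeasurable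
  have h := HasSubgaussianMGF.sum_of_iIndepFun hind (s := Finset.univ) (c := fun _ ↦ 1 / 4)
    fun i _ ↦ HasSubgaussianMGF.of_map (measurable_pi_apply i).aemeasurable <| by
      rw [(measurePreserving_eval (fun _ : ι ↦ bern p) i).map_eq]
      exact hasSubgaussianMGF_bern hp0 hp1
  convert h using 1
  simp [div_eq_mul_inv]

lemma ProbabilityTheory.HasSubgaussianMGF.measure_ge_natCast_mul_le {Ω : Type*}
    [MeasurableSpace Ω] {μ : Measure Ω} [IsFiniteMeasure μ] {X : Ω → ℝ} {n : ℕ}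
    (hX : HasSubgaussianMGF X (n / 4) μ) {s : ℝ} (hs : 0 ≤ s) :
    μ {ω | n * s ≤ X ω} ≤ ENNReal.ofReal (exp (-2 * n * s ^ 2)) := by
  have h := hX.measure_ge_le (ε := n * s) (by positivity)
  have hexp : -((n : ℝ) * s) ^ 2 / (2 * ((n / 4 : ℝ≥0) : ℝ)) = -2 * n * s ^ 2 := by
    rcases eq_or_ne (n : ℝ) 0 with hn | hn
    · simp [hn]
    · push_cast; field_simp; ring
  rw [← ofReal_measureReal]
  exact ENNReal.ofReal_le_ofReal (h.trans_eq (by rw [hexp]))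

section EmpiricalMean

variable {t : ℕ} {p s : ℝ}

lemma sum_ite_sub_eq_natCast_mul (v : Fin t → Bool) (p : ℝ) :
    ∑ i, ((if v i then (1 : ℝ) else 0) - p) = t * (empMean v - p) := by
  obtain rfl | ht := t.eq_zero_or_pos
  · simp
  · simp [Finset.sum_sub_distrib, empMean, field]

lemma measure_le_empMean_le (hp0 : 0 ≤ p) (hp1 : p ≤ 1) (hs : 0 ≤ s) :
    (Measure.pi fun _ : Fin t ↦ bern p) {v | p + s ≤ empMean v} ≤
      ENNReal.ofReal (exp (-2 * t * s ^ 2)) := by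
  have hX := hasSubgaussianMGF_sum_pi_bern (ι := Fin t) hp0 hp1
  rw [Fintype.card_fin] at hX
  refine (measure_mono fun v hv ↦ ?_).trans (hX.measure_ge_natCast_mul_le hs)
  simp only [Set.mem_ofPred_eq, sum_ite_sub_eq_natCast_mul] at hv ⊢
  exact mul_le_mul_of_nonneg_left (by linarith) t.cast_nonneg

lemma measure_empMean_le_le (hp0 : 0 ≤ p) (hp1 : p ≤ 1) (hs : 0 ≤ s) :
    (Measure.pi fun _ : Fin t ↦ bern p) {v | empMean v ≤ p - s} ≤
      ENNReal.ofReal (exp (-2 * t * s ^ 2)) := by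
  have hX := (hasSubgaussianMGF_sum_pi_bern (ι := Fin t) hp0 hp1).neg
  rw [Fintype.card_fin] at hX
  refine (measure_mono fun v hv ↦ ?_).trans (hX.measure_ge_natCast_mul_le hs)
  simp only [Set.mem_ofPred_eq, Pi.neg_apply, sum_ite_sub_eq_natCast_mul] at hv ⊢
  nlinarith [t.cast_nonneg (α := ℝ)]

lemma measure_le_abs_empMean_sub_le (hp0 : 0 ≤ p) (hp1 : p ≤ 1) (hs : 0 ≤ s) :
    (Measure.pi fun _ : Fin t ↦ bern p) {v | s ≤ |empMean v - p|} ≤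
      2 * ENNReal.ofReal (exp (-2 * t * s ^ 2)) := by
  have hsplit : {v : Fin t → Bool | s ≤ |empMean v - p|} ⊆
      {v | p + s ≤ empMean v} ∪ {v | empMean v ≤ p - s} := fun v (hv : s ≤ |empMean v - p|) ↦ by
    rcases le_abs'.mp hv with h | h
    · exact Or.inr (by simp only [Set.mem_ofPred_eq]; linarith)
    · exact Or.inl (by simp only [Set.mem_ofPred_eq]; linarith)
  rw [two_mul]
  exact (measure_mono hsplit).trans <| (measure_union_le _ _).trans <|
    add_le_add (measure_le_empMean_le hp0 hp1 hs) (measure_empMean_le_le hp0 hp1 hs)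

lemma exists_measure_le_and_sub_lt_abs_empMean_sub (θ : ℝ) (hp0 : 0 ≤ p) (hp1 : p ≤ 1)
    (hs : 0 ≤ s) :
    ∃ B : Set (Fin t → Bool),
      (Measure.pi fun _ ↦ bern p) B ≤ ENNReal.ofReal (exp (-2 * t * s ^ 2)) ∧
        ∀ v ∉ B, |p - θ| - s < |empMean v - θ| := by
  rcases le_total θ p with hθ | hθ
  · refine ⟨_, measure_empMean_le_le hp0 hp1 hs, fun v hv ↦ ?_⟩
    simp only [Set.mem_ofPred_eq, not_le] at hv
    rw [abs_of_nonneg (sub_nonneg.mpr hθ)]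
    exact lt_of_lt_of_le (by linarith) (le_abs_self _)
  · refine ⟨_, measure_le_empMean_le hp0 hp1 hs, fun v hv ↦ ?_⟩
    simp only [Set.mem_ofPred_eq, not_le] at hv
    rw [abs_of_nonpos (sub_nonpos.mpr hθ)]
    exact lt_of_lt_of_le (by linarith) (neg_le_abs _)

end EmpiricalMean

theorem sequential_halving_inversion_general (t : ℕ) (θ pk pstar : ℝ)
    (hpk0 : 0 < pk) (hpk1 : pk < 1)
    (hps0 : 0 < pstar) (hps1 : pstar < 1)
    (hsub : |pstar - θ| < |pk - θ|) :
    ((Measure.pi fun _ : Fin t => bern pk).prod (Measure.pi fun _ : Fin t => bern pstar))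
        {ω | |empMean ω.1 - θ| < |empMean ω.2 - θ|} ≤
      ENNReal.ofReal (3 * Real.exp (-((t : ℝ) / 2) * (|pk - θ| - |pstar - θ|) ^ 2)) := by
  set s := (|pk - θ| - |pstar - θ|) / 2 with hs_def
  have hs : 0 ≤ s := by linarith
  obtain ⟨B, hB, hfar⟩ := exists_measure_le_and_sub_lt_abs_empMean_sub θ hpk0.le hpk1.le hs
  have hincl : {ω : (Fin t → Bool) × (Fin t → Bool) | |empMean ω.1 - θ| < |empMean ω.2 - θ|} ⊆
      B ×ˢ Set.univ ∪ Set.univ ×ˢ {w | s ≤ |empMean w - pstar|} := by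
    rintro ⟨v, w⟩ hvw
    by_contra! h
    simp only [Set.mem_union, Set.mem_prod, Set.mem_univ, and_true, true_and, Set.mem_ofPred_eq,
      not_or, not_le] at h hvw
    linarith [hfar v h.1, abs_sub_le (empMean w) pstar θ]
  calc _ ≤ _ := measure_mono hincl
    _ ≤ (Measure.pi fun _ ↦ bern pk) B +
          (Measure.pi fun _ ↦ bern pstar) {w | s ≤ |empMean w - pstar|} := by
      refine (measure_union_le _ _).trans_eq ?_
      simp only [Measure.prod_prod, measure_univ, mul_one, one_mul]
    _ ≤ ENNReal.ofReal (exp (-2 * t * s ^ 2)) + 2 * ENNReal.ofReal (exp (-2 * t * s ^ 2)) :=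
      add_le_add hB (measure_le_abs_empMean_sub_le hps0.le hps1.le hs)
    _ = _ := by
      rw [← ENNReal.ofReal_ofNat 2, ← ENNReal.ofReal_mul zero_le_two, ← ENNReal.ofReal_add
        (exp_pos _).le (by positivity), hs_def]
      ring_nf

/-- Sequential Halving inversion bound: let p_k, p_{k*}, θ ∈ (0,1) with
|p_{k*} - θ| < |p_k - θ|, and let p̂_k, p̂_{k*} be empirical means of t independent
Bernoulli(p_k), resp. Bernoulli(p_{k*}), samples (independent of each other). Then
P(|p̂_{k*} - θ| > |p̂_k - θ|) ≤ 3 exp(-(t/2)·Δ_k²), where Δ_k = |p_k - θ| - |p_{k*} - θ|. -/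
theorem sequential_halving_inversion (t : ℕ) (ht : 1 ≤ t) (θ pk pstar : ℝ)
    (hθ0 : 0 < θ) (hθ1 : θ < 1) (hpk0 : 0 < pk) (hpk1 : pk < 1)
    (hps0 : 0 < pstar) (hps1 : pstar < 1)
    (hsub : |pstar - θ| < |pk - θ|) :
    ((Measure.pi fun _ : Fin t => bern pk).prod (Measure.pi fun _ : Fin t => bern pstar))
        {ω | |empMean ω.1 - θ| < |empMean ω.2 - θ|} ≤
      ENNReal.ofReal (3 * Real.exp (-((t : ℝ) / 2) * (|pk - θ| - |pstar - θ|) ^ 2)) :=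
  sequential_halving_inversion_general t θ pk pstar hpk0 hpk1 hps0 hps1 hsub
end
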